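/- arXiv:1408.2232 — 5 statements merged into one kernel-verified Lean document; each statement's English description precedes it below -/
import Mathlib

section
/- Let c ∈ (0,1), ε > 0, α > 0, β > 0. Then the fixed-point equation e = (1 + cα/(1 + α e) + c β ε/(1 + β ε e))^{-1} has a unique nonnegative real solution e, and this solution satisfies e > 0. -/
/-!
Writing the equation as `e = (1 + φ e)⁻¹` with `φ e = c α / (1 + α e) + c β ε / (1 + β ε e) ≥ 0`,
a nonnegative solution is exactly a root of `e * (1 + φ e) = 1`. This map is continuous,
vanishes at `0`, is at least `1` at `1`, and is strictly increasing on `[0, ∞)`, because each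
`e * (a / (1 + b e)) = a e / (1 + b e)` is nondecreasing there; so it takes the value `1` exactly once.
Any solution is positive, being the inverse of `1 + φ e ≥ 1`.
-/

open Set

section InvOneAdd

variable {φ : ℝ → ℝ}

theorem exists_eq_inv_one_add (hφ : ∀ e, 0 ≤ e → 0 ≤ φ e) (hcont : ContinuousOn φ (Ici 0)) :
    ∃ e, 0 ≤ e ∧ e = (1 + φ e)⁻¹ := by
  have hψ : ContinuousOn (fun e => e * (1 + φ e)) (Icc 0 1) :=
    (continuousOn_id.mul (continuousOn_const.add hcont)).mono Icc_subset_Ici_self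
  have hψ01 : (1 : ℝ) ∈ Icc (0 * (1 + φ 0)) (1 * (1 + φ 1)) :=
    ⟨by simp, by linarith [hφ 1 zero_le_one]⟩
  obtain ⟨e, he, hψe⟩ := intermediate_value_Icc zero_le_one hψ hψ01
  exact ⟨e, he.1, eq_inv_of_mul_eq_one_left hψe⟩

theorem existsUnique_eq_inv_one_add (hφ : ∀ e, 0 ≤ e → 0 ≤ φ e)
    (hcont : ContinuousOn φ (Ici 0)) (hmono : StrictMonoOn (fun e => e * (1 + φ e)) (Ici 0)) :
    ∃! e, 0 ≤ e ∧ e = (1 + φ e)⁻¹ := by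
  obtain ⟨e, he, hfix⟩ := exists_eq_inv_one_add hφ hcont
  have hψ : ∀ x, 0 ≤ x → x = (1 + φ x)⁻¹ → x * (1 + φ x) = 1 := fun x hx hfix => by
    nth_rw 1 [hfix]
    exact inv_mul_cancel₀ (by linarith [hφ x hx])
  refine ⟨e, ⟨he, hfix⟩, fun x ⟨hx, hxfix⟩ => hmono.injOn hx he ?_⟩
  simp only [hψ x hx hxfix, hψ e he hfix]

theorem pos_of_eq_inv_one_add {e : ℝ} (hφ : 0 ≤ φ e) (hfix : e = (1 + φ e)⁻¹) : 0 < e :=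
  hfix ▸ inv_pos.mpr (by linarith)

end InvOneAdd

section RationalTerm

variable {a b : ℝ}

theorem continuousOn_div_one_add_mul (hb : 0 ≤ b) :
    ContinuousOn (fun x => a / (1 + b * x)) (Ici 0) :=
  continuousOn_const.div (by fun_prop) fun x (hx : 0 ≤ x) => by positivity

theorem monotoneOn_mul_div_one_add_mul (ha : 0 ≤ a) (hb : 0 ≤ b) :
    MonotoneOn (fun x => x * (a / (1 + b * x))) (Ici 0) := by
  intro x (hx : 0 ≤ x) y (hy : 0 ≤ y) hxy
  have hx' : 0 < 1 + b * x := by positivity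
  have hy' : 0 < 1 + b * y := by positivity
  simp only [mul_div_assoc']
  rw [div_le_div_iff₀ hx' hy']
  nlinarith [mul_le_mul_of_nonneg_left hxy ha]

end RationalTerm

theorem fixed_point_unique_positive_general {c ε α β : ℝ}
    (hc0 : 0 < c) (hε : 0 < ε) (hα : 0 < α) (hβ : 0 < β) :
    (∃! e : ℝ, 0 ≤ e ∧
        e = (1 + c * α / (1 + α * e) + c * β * ε / (1 + β * ε * e))⁻¹) ∧
    ∀ e : ℝ, 0 ≤ e →
      e = (1 + c * α / (1 + α * e) + c * β * ε / (1 + β * ε * e))⁻¹ → 0 < e := by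
  set φ : ℝ → ℝ := fun e => c * α / (1 + α * e) + c * β * ε / (1 + β * ε * e)
  have ha₁ : 0 ≤ c * α := by positivity
  have ha₂ : 0 ≤ c * β * ε := by positivity
  have hb₂ : 0 ≤ β * ε := by positivity
  have hφ : ∀ e, 0 ≤ e → 0 ≤ φ e := fun e he => by positivity
  have hcont : ContinuousOn φ (Ici 0) :=
    (continuousOn_div_one_add_mul hα.le).add (continuousOn_div_one_add_mul hb₂)
  have hmono : StrictMonoOn (fun e => e * (1 + φ e)) (Ici 0) := by
    have := (strictMonoOn_id (s := Ici (0 : ℝ))).add_monotone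
      ((monotoneOn_mul_div_one_add_mul ha₁ hα.le).add (monotoneOn_mul_div_one_add_mul ha₂ hb₂))
    convert this using 2 with e
    simp only [φ, id]
    ring
  simp only [add_assoc]
  exact ⟨existsUnique_eq_inv_one_add hφ hcont hmono,
    fun e he => pos_of_eq_inv_one_add (hφ e he)⟩

/-- The fixed-point equation `e = (1 + cα/(1+αe) + cβε/(1+βεe))⁻¹` has a unique
nonnegative real solution, and this solution is positive. -/
theorem fixed_point_unique_positive {c ε α β : ℝ}
    (hc0 : 0 < c) (hc1 : c < 1) (hε : 0 < ε) (hα : 0 < α) (hβ : 0 < β) :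
    (∃! e : ℝ, 0 ≤ e ∧
        e = (1 + c * α / (1 + α * e) + c * β * ε / (1 + β * ε * e))⁻¹) ∧
    ∀ e : ℝ, 0 ≤ e →
      e = (1 + c * α / (1 + α * e) + c * β * ε / (1 + β * ε * e))⁻¹ → 0 < e :=
  fixed_point_unique_positive_general hc0 hε hα hβ
end

section
/- Fix c ∈ (0,1), ε > 0 and β > 0. For each α > 0 let e(α) be the unique positive solution of e = (1 + cα/(1 + α e) + c β ε/(1 + β ε e))^{-1}. Then as α → ∞, α·e(α) → ∞; in particular, 0 < liminf_{α→∞} e(α) and limsup_{α→∞} e(α) < ∞. -/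
open Filter

/-- Boundedness of the deterministic-equivalent fixed point as `α → ∞`:
`α e(α) → ∞`, `liminf e > 0`, and `e` stays bounded above. -/
theorem fixed_point_bounded_alpha {c ε β : ℝ}
    (hc0 : 0 < c) (hc1 : c < 1) (hε : 0 < ε) (hβ : 0 < β)
    (e : ℝ → ℝ)
    (he : ∀ α > (0 : ℝ), 0 < e α ∧
        e α = (1 + c * α / (1 + α * e α) + c * β * ε / (1 + β * ε * e α))⁻¹) :
    Tendsto (fun α : ℝ => α * e α) atTop atTop ∧
    0 < liminf e atTop ∧
    IsBoundedUnder (· ≤ ·) atTop e := by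
  set m : ℝ := (1 - c) / (1 + c * β * ε) with hm
  have hm0 : 0 < m := div_pos (by linarith) (by positivity)
  have key : ∀ α > (0 : ℝ), m ≤ e α ∧ e α ≤ 1 := by
    intro α hα
    obtain ⟨hx, hfix⟩ := he α hα
    set x := e α with hxdef
    have hd1 : (0:ℝ) < 1 + α * x := by positivity
    have hd2 : (0:ℝ) < 1 + β * ε * x := by positivity
    have ht10 : 0 ≤ c * α / (1 + α * x) := by positivity
    have ht20 : 0 ≤ c * β * ε / (1 + β * ε * x) := by positivity
    have hD : (1:ℝ) ≤ 1 + c * α / (1 + α * x) + c * β * ε / (1 + β * ε * x) := by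
      linarith
    have hD0 : (1 + c * α / (1 + α * x) + c * β * ε / (1 + β * ε * x)) ≠ 0 := by
      linarith
    have hxD : x * (1 + c * α / (1 + α * x) + c * β * ε / (1 + β * ε * x)) = 1 := by
      nth_rewrite 1 [hfix]
      exact inv_mul_cancel₀ hD0
    have hup : x ≤ 1 := by
      nlinarith [mul_le_mul_of_nonneg_left hD hx.le]
    have ht1 : x * (c * α / (1 + α * x)) ≤ c := by
      rw [← mul_div_assoc, div_le_iff₀ hd1]
      nlinarith
    have ht2 : x * (c * β * ε / (1 + β * ε * x)) ≤ c * β * ε * x := by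
      rw [← mul_div_assoc]
      calc x * (c * β * ε) / (1 + β * ε * x) ≤ x * (c * β * ε) := by
            apply div_le_self (by positivity) (by nlinarith [mul_pos (mul_pos hβ hε) hx])
        _ = c * β * ε * x := by ring
    have hexp : x + x * (c * α / (1 + α * x)) + x * (c * β * ε / (1 + β * ε * x)) = 1 := by
      linarith [hxD, mul_add x (1 + c * α / (1 + α * x)) (c * β * ε / (1 + β * ε * x))]
    have hlow : m ≤ x := by
      rw [hm, div_le_iff₀ (by positivity)]
      nlinarith
    exact ⟨hlow, hup⟩
  have hub : ∀ᶠ α in atTop, e α ≤ 1 := by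
    filter_upwards [eventually_gt_atTop (0:ℝ)] with α hα using (key α hα).2
  have hlb : ∀ᶠ α in atTop, m ≤ e α := by
    filter_upwards [eventually_gt_atTop (0:ℝ)] with α hα using (key α hα).1
  have hbdd : IsBoundedUnder (· ≤ ·) atTop e := isBoundedUnder_of_eventually_le hub
  refine ⟨?_, ?_, hbdd⟩
  · have h1 : Tendsto (fun α : ℝ => m * α) atTop atTop :=
      Tendsto.const_mul_atTop hm0 tendsto_id
    apply tendsto_atTop_mono' atTop ?_ h1
    filter_upwards [eventually_gt_atTop (0:ℝ)] with α hα
    have := (key α hα).1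
    nlinarith
  · have : m ≤ liminf e atTop :=
      le_liminf_of_le (hbdd.isCoboundedUnder_ge) hlb
    linarith
end

section
/- Let c ∈ (0,1), ε > 0, τ ∈ [0,1], P > 0. For β > 0 let e = e(β) > 0 solve e = (1 + c/e + cβε/(1 + βεe))^{-1}, and define S(β) = P(1 - c - cβ²ε²e²/(1+βεe)²) / (1 + Pcε(1 + 2βετ²e + β²ε²τ²e²)/(1+βεe)²). Then every interior critical point of S on (0,∞) satisfies β = P(1-τ²)/(Pcετ² + 1); i.e., ∂S/∂β = 0 at β₀ = P(1-τ²)/(Pcετ²+1). -/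
/-!
In the variable `w = (1 + βεe)⁻¹` the SINR becomes a rational function `g(w)` that involves
neither `β` nor `e`, and `w'(β) = -ε(e + βe')/(1 + βεe)² ≠ 0`, so a critical point of `S` is a
critical point of `g`. Writing `u = 1 - w = βεe·w`, the fixed point equation reads
`e = 1 - c - cu`; substituting it into `g'(w) = 0` collapses that equation to
`c u (Pcετ² + 1) = e·Pcε(1 - τ²)·w`, and `u = βεe·w` turns this into `β (Pcετ² + 1) = P(1 - τ²)`.
-/

open Topology

theorem HasDerivAt.eq_zero_of_deriv_comp_eq_zero {f g : ℝ → ℝ} {f' g' x : ℝ}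
    (hg : HasDerivAt g g' (f x)) (hf : HasDerivAt f f' x) (hf' : f' ≠ 0)
    (h : _root_.deriv (fun y => g (f y)) x = 0) : g' = 0 := by
  have hcomp : HasDerivAt (fun y => g (f y)) (g' * f') x := hg.comp x hf
  rw [hcomp.deriv] at h
  exact (mul_eq_zero.mp h).resolve_right hf'

theorem HasDerivAt.one_add_mul_mul {f : ℝ → ℝ} {f' x : ℝ} (a : ℝ) (hf : HasDerivAt f f' x) :
    HasDerivAt (fun y => 1 + y * a * f y) (a * (f x + x * f')) x := by
  refine (((hasDerivAt_id x).mul_const a).mul hf).const_add 1 |>.congr_deriv ?_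
  simp only [id_eq]
  ring

namespace IaRZF

/-- The SINR `S(β)` written in the variable `w = (1 + βεe)⁻¹`. -/
noncomputable def sinrOfInv (c ε τ P w : ℝ) : ℝ :=
  (P * (1 - c) - P * c * (1 - w) ^ 2) /
    (P * c * ε * τ ^ 2 + 1 + P * c * ε * (1 - τ ^ 2) * w ^ 2)

variable {c ε τ P : ℝ}

theorem eq_of_fixedPoint {b E : ℝ} (hE : E ≠ 0) (hD : 1 + b * ε * E ≠ 0)
    (h : E = (1 + c / E + c * b * ε / (1 + b * ε * E))⁻¹) :
    E = 1 - c - c * (1 - (1 + b * ε * E)⁻¹) := by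
  have hX : 1 + c / E + c * b * ε / (1 + b * ε * E) ≠ 0 := fun h0 => hE (by rw [h, h0, inv_zero])
  have h1 : E * (1 + c / E + c * b * ε / (1 + b * ε * E)) = 1 := by
    nth_rewrite 1 [h]
    exact inv_mul_cancel₀ hX
  linear_combination h1 - c * mul_inv_cancel₀ hE - c * mul_inv_cancel₀ hD

theorem sinr_eq_sinrOfInv {b E : ℝ} (hD : 1 + b * ε * E ≠ 0) :
    (P * (1 - c - c * b ^ 2 * ε ^ 2 * E ^ 2 / (1 + b * ε * E) ^ 2)) /
        (1 + P * c * ε * (1 + 2 * b * ε * τ ^ 2 * E + b ^ 2 * ε ^ 2 * τ ^ 2 * E ^ 2) /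
          (1 + b * ε * E) ^ 2) =
      sinrOfInv c ε τ P (1 + b * ε * E)⁻¹ := by
  unfold sinrOfInv
  congr 1
  · field_simp
    ring
  · rw [show 1 + 2 * b * ε * τ ^ 2 * E + b ^ 2 * ε ^ 2 * τ ^ 2 * E ^ 2 =
        1 - τ ^ 2 + τ ^ 2 * (1 + b * ε * E) ^ 2 by ring]
    generalize 1 + b * ε * E = D at hD ⊢
    field_simp
    ring

theorem sinrOfInv_den_pos (hc : 0 < c) (hε : 0 < ε) (hP : 0 < P) (hτ : τ ^ 2 ≤ 1) (w : ℝ) :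
    0 < P * c * ε * τ ^ 2 + 1 + P * c * ε * (1 - τ ^ 2) * w ^ 2 := by
  have : 0 ≤ 1 - τ ^ 2 := by linarith
  positivity

theorem hasDerivAt_sinrOfInv {w : ℝ}
    (hden : P * c * ε * τ ^ 2 + 1 + P * c * ε * (1 - τ ^ 2) * w ^ 2 ≠ 0) :
    HasDerivAt (sinrOfInv c ε τ P)
      (2 * P * (c * (1 - w) * (P * c * ε * τ ^ 2 + 1 + P * c * ε * (1 - τ ^ 2) * w ^ 2) -
          (1 - c - c * (1 - w) ^ 2) * (P * c * ε * (1 - τ ^ 2)) * w) /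
        (P * c * ε * τ ^ 2 + 1 + P * c * ε * (1 - τ ^ 2) * w ^ 2) ^ 2) w := by
  have hnum : HasDerivAt (fun x : ℝ => P * (1 - c) - P * c * (1 - x) ^ 2)
      (2 * P * c * (1 - w)) w := by
    refine ((((hasDerivAt_id w).const_sub 1).pow 2).const_mul (P * c)).const_sub
      (P * (1 - c)) |>.congr_deriv ?_
    simp only [id_eq]
    ring
  have hden' : HasDerivAt (fun x : ℝ => P * c * ε * τ ^ 2 + 1 + P * c * ε * (1 - τ ^ 2) * x ^ 2)
      (2 * P * c * ε * (1 - τ ^ 2) * w) w := by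
    refine ((hasDerivAt_pow 2 w).const_mul (P * c * ε * (1 - τ ^ 2))).const_add
      (P * c * ε * τ ^ 2 + 1) |>.congr_deriv ?_
    push_cast
    ring
  refine (hnum.div hden' hden).congr_deriv ?_
  ring

theorem sinrOfInv_deriv_num_eq {β e : ℝ} (hD : 1 + β * ε * e ≠ 0)
    (hfix : e = 1 - c - c * (1 - (1 + β * ε * e)⁻¹)) :
    2 * P * (c * (1 - (1 + β * ε * e)⁻¹) *
          (P * c * ε * τ ^ 2 + 1 + P * c * ε * (1 - τ ^ 2) * ((1 + β * ε * e)⁻¹) ^ 2) -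
        (1 - c - c * (1 - (1 + β * ε * e)⁻¹) ^ 2) * (P * c * ε * (1 - τ ^ 2)) *
          (1 + β * ε * e)⁻¹) =
      2 * P * c * ε * e * (1 + β * ε * e)⁻¹ *
        (β * (P * c * ε * τ ^ 2 + 1) - P * (1 - τ ^ 2)) := by
  have hu : 1 - (1 + β * ε * e)⁻¹ = β * ε * e * (1 + β * ε * e)⁻¹ := by
    field_simp
    ring
  generalize (1 + β * ε * e)⁻¹ = w at hfix hu ⊢
  linear_combination 2 * P * (P * c * ε * (1 - τ ^ 2)) * w * hfix +
    2 * P * c * (P * c * ε * τ ^ 2 + 1) * hu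

theorem beta_mul_eq_of_hasDerivAt_sinrOfInv_zero (hc : 0 < c) (hε : 0 < ε) (hP : 0 < P)
    (hτ : τ ^ 2 ≤ 1) {β e : ℝ} (hβ : 0 < β) (he : 0 < e)
    (hfix : e = 1 - c - c * (1 - (1 + β * ε * e)⁻¹))
    (hcrit : HasDerivAt (sinrOfInv c ε τ P) 0 (1 + β * ε * e)⁻¹) :
    β * (P * c * ε * τ ^ 2 + 1) = P * (1 - τ ^ 2) := by
  have hD : 0 < 1 + β * ε * e := by positivity
  have hden := sinrOfInv_den_pos hc hε hP hτ (1 + β * ε * e)⁻¹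
  have hnum := (hasDerivAt_sinrOfInv hden.ne').unique hcrit
  rw [div_eq_zero_iff, sinrOfInv_deriv_num_eq hD.ne' hfix] at hnum
  have hcoef : 2 * P * c * ε * e * (1 + β * ε * e)⁻¹ ≠ 0 := by positivity
  have hden2 : (P * c * ε * τ ^ 2 + 1 + P * c * ε * (1 - τ ^ 2) * ((1 + β * ε * e)⁻¹) ^ 2) ^ 2
      ≠ 0 := by positivity
  exact sub_eq_zero.mp ((mul_eq_zero.mp (hnum.resolve_right hden2)).resolve_left hcoef)

end IaRZF

theorem iaRZF_optimal_beta_general {c ε τ P : ℝ}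
    (hc0 : 0 < c) (hε : 0 < ε)
    (hτ0 : 0 ≤ τ) (hτ1 : τ ≤ 1) (hP : 0 < P)
    (e : ℝ → ℝ)
    (he : ∀ β > (0 : ℝ), 0 < e β ∧
        e β = (1 + c / e β + c * β * ε / (1 + β * ε * e β))⁻¹)
    (hdiff : ∀ β > (0 : ℝ), DifferentiableAt ℝ e β)
    (hpos : ∀ β > (0 : ℝ), 0 < e β + β * deriv e β) :
    ∀ β > (0 : ℝ),
      deriv (fun b : ℝ =>
        (P * (1 - c - c * b ^ 2 * ε ^ 2 * (e b) ^ 2 / (1 + b * ε * e b) ^ 2)) /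
          (1 + P * c * ε * (1 + 2 * b * ε * τ ^ 2 * e b + b ^ 2 * ε ^ 2 * τ ^ 2 * (e b) ^ 2) /
            (1 + b * ε * e b) ^ 2)) β = 0 →
      β = P * (1 - τ ^ 2) / (P * c * ε * τ ^ 2 + 1) := by
  intro β hβ hcrit
  obtain ⟨he0, hfix⟩ := he β hβ
  have hD : 0 < 1 + β * ε * e β := by positivity
  have hDer := (hdiff β hβ).hasDerivAt.one_add_mul_mul ε
  have hS : _ =ᶠ[𝓝 β] fun b => IaRZF.sinrOfInv c ε τ P (1 + b * ε * e b)⁻¹ :=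
    (hDer.continuousAt.eventually_ne hD.ne').mono fun b hb => IaRZF.sinr_eq_sinrOfInv hb
  rw [hS.deriv_eq] at hcrit
  have hτ : τ ^ 2 ≤ 1 := pow_le_one₀ hτ0 hτ1
  have hg := IaRZF.hasDerivAt_sinrOfInv
    (IaRZF.sinrOfInv_den_pos hc0 hε hP hτ (1 + β * ε * e β)⁻¹).ne'
  have hw' : -(ε * (e β + β * deriv e β)) / (1 + β * ε * e β) ^ 2 ≠ 0 :=
    div_ne_zero (neg_ne_zero.mpr (mul_pos hε (hpos β hβ)).ne') (by positivity)
  have hg0 := hg.eq_zero_of_deriv_comp_eq_zero (f := fun b => (1 + b * ε * e b)⁻¹)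
    (hDer.inv hD.ne') hw' hcrit
  rw [eq_div_iff (by positivity)]
  exact IaRZF.beta_mul_eq_of_hasDerivAt_sinrOfInv_zero hc0 hε hP hτ hβ he0
    (IaRZF.eq_of_fixedPoint he0.ne' hD.ne' hfix) (hg0 ▸ hg)

/-- Any interior critical point of the deterministic-equivalent SINR `S(β)` in the
`α → ∞` limit occurs at `β = P(1-τ²)/(Pcετ²+1)`. -/
theorem iaRZF_optimal_beta {c ε τ P : ℝ}
    (hc0 : 0 < c) (hc1 : c < 1) (hε : 0 < ε)
    (hτ0 : 0 ≤ τ) (hτ1 : τ ≤ 1) (hP : 0 < P)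
    (e : ℝ → ℝ)
    (he : ∀ β > (0 : ℝ), 0 < e β ∧
        e β = (1 + c / e β + c * β * ε / (1 + β * ε * e β))⁻¹)
    (hdiff : ∀ β > (0 : ℝ), DifferentiableAt ℝ e β)
    (hpos : ∀ β > (0 : ℝ), 0 < e β + β * deriv e β) :
    ∀ β > (0 : ℝ),
      deriv (fun b : ℝ =>
        (P * (1 - c - c * b ^ 2 * ε ^ 2 * (e b) ^ 2 / (1 + b * ε * e b) ^ 2)) /
          (1 + P * c * ε * (1 + 2 * b * ε * τ ^ 2 * e b + b ^ 2 * ε ^ 2 * τ ^ 2 * (e b) ^ 2) /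
            (1 + b * ε * e b) ^ 2)) β = 0 →
      β = P * (1 - τ ^ 2) / (P * c * ε * τ ^ 2 + 1) :=
  iaRZF_optimal_beta_general hc0 hε hτ0 hτ1 hP e he hdiff hpos
end

section
/- Let ν be a nonzero finite nonnegative measure on [0,∞) with compact support and c > 0. For z < 0 (real, outside the support of the induced measure), suppose m(z) satisfies m(z) = (−z + c∫ t/(1 + t m(z)) dν(t))^{-1} with m(z) > 0. Then the map z ↦ m(z) is differentiable on its domain of definition in (−∞, 0) and m'(z) > 0. -/
/-!
Put `ψ(w) = -w⁻¹ + c ∫ t/(1 + t w) dν(t)`. For `m(z) > 0` the fixed-point equation says exactly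
`ψ(m(z)) = z`. As `w ψ(w) = -1 + c ∫ t w/(1 + t w) dν` is nondecreasing, `w (ψ(w) - z)` is strictly
increasing in `w > 0` when `z < 0`, so `m(z)` is its unique positive root and is continuous in `z`.
The bound `(t/(1 + t w))² ≤ w⁻¹ · t/(1 + t w)` gives `ψ'(w) = w⁻² - c ∫ (t/(1 + t w))² dν ≥ -ψ(w)/w`,
which at `w = m(z)` equals `-z/m(z) > 0`; by the inverse function theorem `m'(z) = 1/ψ'(m(z)) > 0`.
-/

open MeasureTheory Set Filter Topology

lemma continuousAt_of_strictMonoOn_root {α : Type*} [TopologicalSpace α] {Φ : α → ℝ → ℝ}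
    {f : α → ℝ} {s : Set ℝ} {z₀ : α} (hs : s ∈ 𝓝 (f z₀))
    (hΦ : ∀ w, ContinuousAt (Φ · w) z₀) (hmono : ∀ᶠ z in 𝓝 z₀, StrictMonoOn (Φ z) s)
    (hroot : ∀ᶠ z in 𝓝 z₀, f z ∈ s ∧ Φ z (f z) = 0) :
    ContinuousAt f z₀ := by
  obtain ⟨l, u, ⟨hl, hu⟩, hlu⟩ := mem_nhds_iff_exists_Ioo_subset.1 hs
  obtain ⟨hs₀, hroot₀⟩ := hroot.self_of_nhds
  have hmono₀ := hmono.self_of_nhds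
  refine tendsto_order.2 ⟨fun a ha => ?_, fun b hb => ?_⟩
  · obtain ⟨a', ha', ha'f⟩ := exists_between (max_lt ha hl)
    have ha's : a' ∈ s := hlu ⟨(le_max_right _ _).trans_lt ha', ha'f.trans hu⟩
    have hneg : Φ z₀ a' < 0 := hroot₀ ▸ hmono₀ ha's hs₀ ha'f
    filter_upwards [(hΦ a').eventually_lt continuousAt_const hneg, hmono, hroot]
      with z hz hmonoz ⟨hfs, hf⟩
    exact (le_max_left _ _).trans_lt (ha'.trans ((hmonoz.lt_iff_lt ha's hfs).1 (hf ▸ hz)))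
  · obtain ⟨b', hfb', hb'⟩ := exists_between (lt_min hb hu)
    have hb's : b' ∈ s := hlu ⟨hl.trans hfb', hb'.trans_le (min_le_right _ _)⟩
    have hpos : 0 < Φ z₀ b' := hroot₀ ▸ hmono₀ hs₀ hb's hfb'
    filter_upwards [continuousAt_const.eventually_lt (hΦ b') hpos, hmono, hroot]
      with z hz hmonoz ⟨hfs, hf⟩
    exact ((hmonoz.lt_iff_lt hfs hb's).1 (hf ▸ hz)).trans (hb'.trans_le (min_le_left _ _))

section PointwiseBounds

variable {t w : ℝ}

lemma div_one_add_mul_nonneg (ht : 0 ≤ t) (hw : 0 ≤ w) : 0 ≤ t / (1 + t * w) := by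
  positivity

lemma div_one_add_mul_le_inv (ht : 0 ≤ t) (hw : 0 < w) : t / (1 + t * w) ≤ w⁻¹ := by
  rw [div_le_iff₀ (by positivity), inv_mul_eq_div, le_div_iff₀ hw]
  linarith

lemma hasDerivAt_div_one_add_mul (ht : 0 ≤ t) (hw : 0 ≤ w) :
    HasDerivAt (fun w => t / (1 + t * w)) (-(t / (1 + t * w)) ^ 2) w := by
  have hne : 1 + t * w ≠ 0 := by positivity
  refine ((hasDerivAt_const w t).div (((hasDerivAt_id w).const_mul t).const_add 1) hne
    ).congr_deriv ?_
  simp only [id]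
  field_simp
  ring

lemma monotoneOn_mul_div_one_add_mul_s15 (ht : 0 ≤ t) :
    MonotoneOn (fun w => w * (t / (1 + t * w))) (Ici 0) := by
  intro w₁ hw₁ w₂ hw₂ hw
  rw [mem_Ici] at hw₁ hw₂
  dsimp only
  rw [mul_div_assoc', mul_div_assoc', div_le_div_iff₀ (by positivity) (by nlinarith)]
  nlinarith [mul_nonneg ht ht]

end PointwiseBounds

section Integrals

variable {ν : Measure ℝ} [IsFiniteMeasure ν] (hν : ∀ᵐ t ∂ν, 0 ≤ t)
include hν

lemma integrable_div_one_add_mul {w : ℝ} (hw : 0 < w) :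
    Integrable (fun t => t / (1 + t * w)) ν := by
  refine Integrable.mono' (integrable_const w⁻¹)
    (by fun_prop : Measurable _).aestronglyMeasurable ?_
  filter_upwards [hν] with t ht
  rw [Real.norm_of_nonneg (div_one_add_mul_nonneg ht hw.le)]
  exact div_one_add_mul_le_inv ht hw

lemma hasDerivAt_integral_div_one_add_mul {w₀ : ℝ} (hw₀ : 0 < w₀) :
    HasDerivAt (fun w => ∫ t, t / (1 + t * w) ∂ν) (-∫ t, (t / (1 + t * w₀)) ^ 2 ∂ν) w₀ := by
  have hball : ∀ w ∈ Ioi (w₀ / 2), 0 < w := fun w hw => (half_pos hw₀).trans hw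
  rw [← integral_neg]
  refine (hasDerivAt_integral_of_dominated_loc_of_deriv_le
    (F := fun w t => t / (1 + t * w)) (F' := fun w t => -(t / (1 + t * w)) ^ 2)
    (bound := fun _ => (w₀ / 2)⁻¹ ^ 2) (Ioi_mem_nhds (half_lt_self hw₀))
    (.of_forall fun w => (by fun_prop : Measurable _).aestronglyMeasurable)
    (integrable_div_one_add_mul hν hw₀) (by fun_prop : Measurable _).aestronglyMeasurable ?_
    (integrable_const _) ?_).2
  · filter_upwards [hν] with t ht w hw
    rw [norm_neg, norm_pow, Real.norm_of_nonneg (div_one_add_mul_nonneg ht (hball w hw).le)]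
    gcongr
    · exact div_one_add_mul_nonneg ht (hball w hw).le
    exact (div_one_add_mul_le_inv ht (hball w hw)).trans (inv_anti₀ (half_pos hw₀) (le_of_lt hw))
  · filter_upwards [hν] with t ht w hw
    exact hasDerivAt_div_one_add_mul ht (hball w hw).le

lemma monotoneOn_mul_integral_div_one_add_mul :
    MonotoneOn (fun w => w * ∫ t, t / (1 + t * w) ∂ν) (Ioi 0) := by
  intro w₁ hw₁ w₂ hw₂ hw
  simp only [← integral_const_mul]
  refine integral_mono_ae ((integrable_div_one_add_mul hν hw₁).const_mul _)
    ((integrable_div_one_add_mul hν hw₂).const_mul _) ?_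
  filter_upwards [hν] with t ht
  exact monotoneOn_mul_div_one_add_mul_s15 ht (Ioi_subset_Ici_self hw₁) (Ioi_subset_Ici_self hw₂) hw

lemma integral_sq_div_one_add_mul_le {w : ℝ} (hw : 0 < w) :
    ∫ t, (t / (1 + t * w)) ^ 2 ∂ν ≤ w⁻¹ * ∫ t, t / (1 + t * w) ∂ν := by
  rw [← integral_const_mul]
  refine integral_mono_of_nonneg (.of_forall fun t => sq_nonneg _)
    ((integrable_div_one_add_mul hν hw).const_mul _) ?_
  filter_upwards [hν] with t ht
  rw [sq]
  exact mul_le_mul_of_nonneg_right (div_one_add_mul_le_inv ht hw) (div_one_add_mul_nonneg ht hw.le)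

end Integrals

/-- The map `ψ` above: Silverstein's explicit inverse of `z ↦ m(z)`. -/
noncomputable def silversteinInverse (ν : Measure ℝ) (c w : ℝ) : ℝ :=
  -w⁻¹ + c * ∫ t, t / (1 + t * w) ∂ν

namespace silversteinInverse

variable {ν : Measure ℝ} {c w z : ℝ}

lemma eq_of_eq_inv (h : w = (-z + c * ∫ t, t / (1 + t * w) ∂ν)⁻¹) :
    silversteinInverse ν c w = z := by
  rw [silversteinInverse, h, inv_inv, ← h]
  ring

variable [IsFiniteMeasure ν] (hν : ∀ᵐ t ∂ν, 0 ≤ t)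
include hν

lemma strictMonoOn_mul_sub (hc : 0 ≤ c) (hz : z < 0) :
    StrictMonoOn (fun w => w * (silversteinInverse ν c w - z)) (Ioi 0) := by
  have hexpand : ∀ w ∈ Ioi (0 : ℝ), w * (silversteinInverse ν c w - z)
      = c * (w * ∫ t, t / (1 + t * w) ∂ν) - z * w - 1 := fun w hw => by
    rw [silversteinInverse]
    field_simp [(mem_Ioi.1 hw).ne']
    ring
  intro w₁ hw₁ w₂ hw₂ hw
  have h := mul_le_mul_of_nonneg_left
    (monotoneOn_mul_integral_div_one_add_mul hν hw₁ hw₂ hw.le) hc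
  simp only [hexpand w₁ hw₁, hexpand w₂ hw₂]
  nlinarith

lemma hasDerivAt (hw : 0 < w) :
    HasDerivAt (silversteinInverse ν c) ((w ^ 2)⁻¹ - c * ∫ t, (t / (1 + t * w)) ^ 2 ∂ν) w :=
  ((hasDerivAt_inv hw.ne').neg.add
    ((hasDerivAt_integral_div_one_add_mul hν hw).const_mul c)).congr_deriv (by ring)

lemma neg_div_le_deriv (hc : 0 ≤ c) (hw : 0 < w) :
    -silversteinInverse ν c w / w ≤ (w ^ 2)⁻¹ - c * ∫ t, (t / (1 + t * w)) ^ 2 ∂ν := by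
  have h := mul_le_mul_of_nonneg_left (integral_sq_div_one_add_mul_le hν hw) hc
  calc -silversteinInverse ν c w / w = (w ^ 2)⁻¹ - c * (w⁻¹ * ∫ t, t / (1 + t * w) ∂ν) := by
        rw [silversteinInverse]; field_simp; ring
    _ ≤ _ := by linarith

end silversteinInverse

theorem stieltjes_fixed_point_deriv_pos_general
    (ν : Measure ℝ) [IsFiniteMeasure ν]
    (hsupp0 : ν {t : ℝ | t < 0} = 0)
    (c : ℝ) (hc : 0 < c)
    (m : ℝ → ℝ)
    (hm : ∀ z < (0 : ℝ), 0 < m z ∧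
        m z = (-z + c * ∫ t, t / (1 + t * m z) ∂ν)⁻¹) :
    ∀ z < (0 : ℝ), DifferentiableAt ℝ m z ∧ 0 < deriv m z := by
  have hν : ∀ᵐ t ∂ν, 0 ≤ t := by simpa only [ae_iff, not_le] using hsupp0
  have hinv : ∀ z < 0, silversteinInverse ν c (m z) = z := fun z hz =>
    silversteinInverse.eq_of_eq_inv (hm z hz).2
  intro z₀ hz₀
  have hm₀ := (hm z₀ hz₀).1
  have hcont : ContinuousAt m z₀ := by
    refine continuousAt_of_strictMonoOn_root (Φ := fun z w => w * (silversteinInverse ν c w - z))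
      (Ioi_mem_nhds hm₀) (fun w => by fun_prop) ?_ ?_ <;>
    filter_upwards [Iio_mem_nhds hz₀] with z hz
    · exact silversteinInverse.strictMonoOn_mul_sub hν hc.le hz
    · simp [(hm z hz).1, hinv z hz]
  have hD := (silversteinInverse.neg_div_le_deriv hν hc.le hm₀).trans_lt' <| by
    rw [hinv z₀ hz₀]; exact div_pos (neg_pos.2 hz₀) hm₀
  have hm' := HasDerivAt.of_local_left_inverse hcont (silversteinInverse.hasDerivAt hν hm₀)
    hD.ne' (eventually_of_mem (Iio_mem_nhds hz₀) hinv)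
  exact ⟨hm'.differentiableAt, hm'.deriv ▸ inv_pos.2 hD⟩

/-- A Stieltjes-transform-type fixed point `m(z) = (−z + c ∫ t/(1 + t m(z)) dν(t))⁻¹`,
for a nonzero finite nonnegative measure `ν` supported on a compact subset of `[0,∞)`,
is differentiable in `z < 0` with positive derivative. -/
theorem stieltjes_fixed_point_deriv_pos
    (ν : Measure ℝ) [IsFiniteMeasure ν] (hν : ν ≠ 0)
    (hsupp0 : ν {t : ℝ | t < 0} = 0) (hsuppR : ∃ R : ℝ, ν {t : ℝ | R < t} = 0)
    (c : ℝ) (hc : 0 < c)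
    (m : ℝ → ℝ)
    (hm : ∀ z < (0 : ℝ), 0 < m z ∧
        m z = (-z + c * ∫ t, t / (1 + t * m z) ∂ν)⁻¹) :
    ∀ z < (0 : ℝ), DifferentiableAt ℝ m z ∧ 0 < deriv m z :=
  stieltjes_fixed_point_deriv_pos_general ν hsupp0 c hc m hm
end

section
/- Let A ∈ ℂ^{N×N} be Hermitian positive semidefinite, x ∈ ℂ^N, c > 0, and ξ > 0. Define Q = (A + c x x^H + ξ I)^{-1} and Q' = (A + ξ I)^{-1}. Then for any matrix B ∈ ℂ^{N×N}, |tr(B(Q − Q'))| ≤ ‖B‖₂ / ξ, where ‖B‖₂ is the spectral norm. -/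
open Matrix
open scoped ComplexOrder

/-!
With `M = A + ξ • 1`, `u = M⁻¹ x` and `α = xᴴ M⁻¹ x`, the Sherman–Morrison formula gives
`Q - Q' = -(c / (1 + c α)) • u uᴴ`, so the trace is `-(c / (1 + c α)) · uᴴ B u`, of modulus at
most `c ‖B‖ ‖u‖² / (1 + c α)`. Writing `α = uᴴ M u = uᴴ A u + ξ ‖u‖² ≥ ξ ‖u‖²` shows that this
is at most `‖B‖ / ξ`.
-/

namespace Matrix

variable {n : Type*} [DecidableEq n]

theorem PosSemidef.posDef_add_smul_one {A : Matrix n n ℂ} (hA : A.PosSemidef) {ξ : ℝ}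
    (hξ : 0 < ξ) : (A + (ξ : ℂ) • 1).PosDef :=
  PosDef.posSemidef_add hA (PosDef.one.smul (by exact_mod_cast hξ))

variable [Fintype n]

theorem inv_add_smul_vecMulVec {K : Type*} [Field K] {M : Matrix n n K} (hM : IsUnit M.det)
    (c : K) (u v : n → K) (h : 1 + c * (v ⬝ᵥ (M⁻¹ *ᵥ u)) ≠ 0) :
    (M + c • vecMulVec u v)⁻¹ =
      M⁻¹ - (c / (1 + c * (v ⬝ᵥ (M⁻¹ *ᵥ u)))) • vecMulVec (M⁻¹ *ᵥ u) (v ᵥ* M⁻¹) := by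
  refine inv_eq_right_inv ?_
  set s := c / (1 + c * (v ⬝ᵥ (M⁻¹ *ᵥ u)))
  have hs : c - s - c * s * (v ⬝ᵥ (M⁻¹ *ᵥ u)) = 0 := by
    simp only [s]; field_simp; ring
  calc (M + c • vecMulVec u v) * (M⁻¹ - s • vecMulVec (M⁻¹ *ᵥ u) (v ᵥ* M⁻¹))
      = 1 + (c - s - c * s * (v ⬝ᵥ (M⁻¹ *ᵥ u))) • vecMulVec u (v ᵥ* M⁻¹) := by
        simp only [add_mul, mul_sub, Matrix.mul_smul, Matrix.smul_mul, mul_vecMulVec,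
          mulVec_mulVec, mul_nonsing_inv _ hM, one_mulVec, vecMulVec_mul, smul_mulVec,
          vecMulVec_mulVec, op_smul_eq_smul, smul_vecMulVec, ← dotProduct_mulVec]
        module
    _ = 1 := by rw [hs, zero_smul, add_zero]

theorem trace_mul_inv_add_smul_vecMulVec_sub_inv {K : Type*} [Field K] {M : Matrix n n K}
    (hM : IsUnit M.det) (c : K) (u v : n → K) (h : 1 + c * (v ⬝ᵥ (M⁻¹ *ᵥ u)) ≠ 0)
    (B : Matrix n n K) :
    (B * ((M + c • vecMulVec u v)⁻¹ - M⁻¹)).trace =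
      -(c / (1 + c * (v ⬝ᵥ (M⁻¹ *ᵥ u)))) * ((v ᵥ* M⁻¹) ⬝ᵥ (B *ᵥ (M⁻¹ *ᵥ u))) := by
  rw [inv_add_smul_vecMulVec hM c u v h, sub_sub_cancel_left, Matrix.mul_neg, Matrix.mul_smul,
    mul_vecMulVec, trace_neg, trace_smul, trace_vecMulVec, dotProduct_comm (B *ᵥ _),
    smul_eq_mul, neg_mul]

theorem norm_star_dotProduct_mulVec_le {𝕜 : Type*} [RCLike 𝕜] (B : Matrix n n 𝕜) (u : n → 𝕜) :
    ‖star u ⬝ᵥ (B *ᵥ u)‖ ≤ ‖toEuclideanCLM (𝕜 := 𝕜) B‖ * ‖WithLp.toLp 2 u‖ ^ 2 := by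
  have h_inner : star u ⬝ᵥ (B *ᵥ u) =
      inner 𝕜 (WithLp.toLp 2 u) (toEuclideanCLM (𝕜 := 𝕜) B (WithLp.toLp 2 u)) := by
    rw [toEuclideanCLM_toLp, EuclideanSpace.inner_toLp_toLp, dotProduct_comm]
  rw [h_inner, sq, ← mul_assoc]
  calc _ ≤ _ := norm_inner_le_norm _ _
    _ ≤ _ := by rw [mul_comm]; gcongr; exact ContinuousLinearMap.le_opNorm _ _

theorem PosSemidef.mul_norm_sq_inv_add_smul_one_mulVec_le {A : Matrix n n ℂ}
    (hA : A.PosSemidef) {ξ : ℝ} (hξ : 0 < ξ) (x : n → ℂ) :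
    ((ξ * ‖WithLp.toLp 2 ((A + (ξ : ℂ) • 1)⁻¹ *ᵥ x)‖ ^ 2 : ℝ) : ℂ) ≤
      star x ⬝ᵥ ((A + (ξ : ℂ) • 1)⁻¹ *ᵥ x) := by
  set M := A + (ξ : ℂ) • 1
  set u := M⁻¹ *ᵥ x
  have hM : M.PosDef := hA.posDef_add_smul_one hξ
  have hMu : M *ᵥ u = x := by
    rw [mulVec_mulVec, mul_nonsing_inv _ ((isUnit_iff_isUnit_det M).mp hM.isUnit), one_mulVec]
  have hu : ((‖WithLp.toLp 2 u‖ ^ 2 : ℝ) : ℂ) = star u ⬝ᵥ u := by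
    rw [← RCLike.ofReal_eq_complex_ofReal, RCLike.ofReal_pow, ← inner_self_eq_norm_sq_to_K,
      EuclideanSpace.inner_toLp_toLp, dotProduct_comm]
  calc ((ξ * ‖WithLp.toLp 2 u‖ ^ 2 : ℝ) : ℂ) ≤ star u ⬝ᵥ (A *ᵥ u) + ξ * (star u ⬝ᵥ u) := by
        rw [Complex.ofReal_mul, hu]
        exact le_add_of_nonneg_left (hA.dotProduct_mulVec_nonneg u)
    _ = star u ⬝ᵥ (M *ᵥ u) := by
        rw [add_mulVec, dotProduct_add, smul_mulVec, one_mulVec, dotProduct_smul, smul_eq_mul]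
    _ = star x ⬝ᵥ u := by
        rw [dotProduct_mulVec, ← hM.isHermitian.eq, ← star_mulVec, hMu]

end Matrix

/-- Rank-one perturbation lemma: a rank-one update inside a regularized resolvent changes
the trace against any matrix `B` by at most `‖B‖₂ / ξ` (spectral norm). -/
theorem rank_one_perturbation_lemma {N : ℕ}
    (A : Matrix (Fin N) (Fin N) ℂ) (hA : A.PosSemidef)
    (x : Fin N → ℂ) (c ξ : ℝ) (hc : 0 < c) (hξ : 0 < ξ)
    (B : Matrix (Fin N) (Fin N) ℂ) :
    ‖((B * ((A + (c : ℂ) • vecMulVec x (star x) + (ξ : ℂ) • 1)⁻¹ -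
          (A + (ξ : ℂ) • 1)⁻¹)).trace)‖
      ≤ ‖Matrix.toEuclideanCLM (𝕜 := ℂ) B‖ / ξ := by
  set M := A + (ξ : ℂ) • 1
  set u := M⁻¹ *ᵥ x
  set t := ‖WithLp.toLp 2 u‖ ^ 2
  have hM : M.PosDef := hA.posDef_add_smul_one hξ
  obtain ⟨a, ha, hta⟩ : ∃ a : ℝ, star x ⬝ᵥ u = a ∧ ξ * t ≤ a := by
    have h := hA.mul_norm_sq_inv_add_smul_one_mulVec_le hξ x
    exact ⟨_, Complex.eq_re_of_ofReal_le h,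
      Complex.real_le_real.mp (h.trans_eq (Complex.eq_re_of_ofReal_le h))⟩
  have hden : 0 < 1 + c * a := by have : 0 ≤ a := le_trans (by positivity) hta; positivity
  have hstar : star x ᵥ* M⁻¹ = star u := by rw [← hM.isHermitian.inv.eq, ← star_mulVec]
  rw [add_right_comm, trace_mul_inv_add_smul_vecMulVec_sub_inv
    ((isUnit_iff_isUnit_det M).mp hM.isUnit) _ _ _ (by rw [ha]; exact_mod_cast hden.ne') B,
    hstar, ha]
  have hcoef : (c : ℂ) / (1 + c * a) = ((c / (1 + c * a) : ℝ) : ℂ) := by push_cast; rfl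
  have hB := norm_nonneg (toEuclideanCLM (𝕜 := ℂ) B)
  calc _ = c / (1 + c * a) * ‖star u ⬝ᵥ (B *ᵥ u)‖ := by
        rw [norm_mul, norm_neg, hcoef, Complex.norm_real, Real.norm_of_nonneg (by positivity)]
    _ ≤ c / (1 + c * a) * (‖toEuclideanCLM (𝕜 := ℂ) B‖ * t) := by
        gcongr; exact norm_star_dotProduct_mulVec_le B u
    _ ≤ ‖toEuclideanCLM (𝕜 := ℂ) B‖ / ξ := by
        rw [div_mul_eq_mul_div, div_le_div_iff₀ hden hξ]
        nlinarith [mul_nonneg (mul_nonneg hB hc.le) (sub_nonneg.2 hta)]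
end
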